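/- Let V solve the KdV equation, and let ψ > 0 satisfy ψ_t = 2Vψ_x - V_xψ and -ψ_xx + Vψ = 0. Then φ = ψ_x/ψ solves the mKdV equation (inversion of the Miura transformation). -/

import Mathlib

noncomputable section

/-- Partial derivative with respect to the first (space) variable. -/
def px (f : ℝ × ℝ → ℝ) : ℝ × ℝ → ℝ := fun p => deriv (fun x => f (x, p.2)) p.1

/-- Partial derivative with respect to the second (time) variable. -/
def pt (f : ℝ × ℝ → ℝ) : ℝ × ℝ → ℝ := fun p => deriv (fun t => f (p.1, t)) p.2

/-- The KdV functional `KdV(V) = V_t - 6 V V_x + V_xxx`. -/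
def KdVop (f : ℝ × ℝ → ℝ) : ℝ × ℝ → ℝ :=
  fun p => pt f p - 6 * f p * px f p + px (px (px f)) p

/-- The mKdV functional `mKdV(φ) = φ_t - 6 φ² φ_x + φ_xxx`. -/
def mKdVop (f : ℝ × ℝ → ℝ) : ℝ × ℝ → ℝ :=
  fun p => pt f p - 6 * (f p) ^ 2 * px f p + px (px (px f)) p

section helpers
variable {f g : ℝ × ℝ → ℝ}

lemma sliceX (hf : ContDiff ℝ (⊤:ℕ∞) f) (t : ℝ) : Differentiable ℝ fun x => f (x, t) :=
  (hf.comp ((contDiff_id (E := ℝ)).prodMk contDiff_const)).differentiable (by simp)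

lemma hasDerivAt_px (hf : ContDiff ℝ (⊤:ℕ∞) f) (p : ℝ × ℝ) :
    HasDerivAt (fun x => f (x, p.2)) (px f p) p.1 :=
  ((sliceX hf p.2) p.1).hasDerivAt

lemma hasDerivAt_pt (hf : ContDiff ℝ (⊤:ℕ∞) f) (p : ℝ × ℝ) :
    HasDerivAt (fun t => f (p.1, t)) (pt f p) p.2 :=
  (((hf.comp (contDiff_const.prodMk (contDiff_id (E := ℝ)))).differentiable (by simp)) p.2).hasDerivAt

lemma px_eq_fderiv (hf : ContDiff ℝ (⊤:ℕ∞) f) :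
    px f = fun p => fderiv ℝ f p (1, 0) := by
  funext p
  have h1 : HasDerivAt (fun x : ℝ => ((x : ℝ), p.2)) ((1 : ℝ), (0 : ℝ)) p.1 :=
    (hasDerivAt_id _).prodMk (hasDerivAt_const _ _)
  have h2 := ((hf.differentiable (by simp)) p).hasFDerivAt.comp_hasDerivAt p.1 h1
  exact h2.deriv

lemma pt_eq_fderiv (hf : ContDiff ℝ (⊤:ℕ∞) f) :
    pt f = fun p => fderiv ℝ f p (0, 1) := by
  funext p
  have h1 : HasDerivAt (fun t : ℝ => (p.1, (t : ℝ))) ((0 : ℝ), (1 : ℝ)) p.2 :=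
    (hasDerivAt_const _ _).prodMk (hasDerivAt_id _)
  have h2 := ((hf.differentiable (by simp)) p).hasFDerivAt.comp_hasDerivAt p.2 h1
  exact h2.deriv

lemma contDiff_px (hf : ContDiff ℝ (⊤:ℕ∞) f) : ContDiff ℝ (⊤:ℕ∞) (px f) := by
  rw [px_eq_fderiv hf]
  exact (hf.fderiv_right (by simp)).clm_apply contDiff_const

lemma pt_px_comm (hf : ContDiff ℝ (⊤:ℕ∞) f) : pt (px f) = px (pt f) := by
  funext p
  have hdf : Differentiable ℝ f := hf.differentiable (by simp)
  have h2 : ContDiff ℝ (⊤:ℕ∞) (fderiv ℝ f) := hf.fderiv_right (by simp)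
  have hsymm := second_derivative_symmetric (f := f) (f' := fderiv ℝ f)
      (f'' := fderiv ℝ (fderiv ℝ f) p) (fun y => (hdf y).hasFDerivAt)
      ((h2.differentiable (by simp) p).hasFDerivAt)
  have e1 : pt (px f) p = fderiv ℝ (fderiv ℝ f) p (0, 1) (1, 0) := by
    rw [pt_eq_fderiv (contDiff_px hf)]
    simp only [px_eq_fderiv hf]
    rw [fderiv_clm_apply (h2.differentiable (by simp) p) (differentiableAt_const _)]
    simp
  have e2 : px (pt f) p = fderiv ℝ (fderiv ℝ f) p (1, 0) (0, 1) := by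
    have hptf : ContDiff ℝ (⊤:ℕ∞) (pt f) := by
      rw [pt_eq_fderiv hf]
      exact (hf.fderiv_right (by simp)).clm_apply contDiff_const
    rw [px_eq_fderiv hptf]
    simp only [pt_eq_fderiv hf]
    rw [fderiv_clm_apply (h2.differentiable (by simp) p) (differentiableAt_const _)]
    simp
  rw [e1, e2, hsymm]

lemma px_sub (hf : ContDiff ℝ (⊤:ℕ∞) f) (hg : ContDiff ℝ (⊤:ℕ∞) g) :
    px (fun p => f p - g p) = fun p => px f p - px g p :=
  funext fun p => ((hasDerivAt_px hf p).sub (hasDerivAt_px hg p)).deriv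

lemma px_mul (hf : ContDiff ℝ (⊤:ℕ∞) f) (hg : ContDiff ℝ (⊤:ℕ∞) g) :
    px (fun p => f p * g p) = fun p => px f p * g p + f p * px g p :=
  funext fun p => ((hasDerivAt_px hf p).mul (hasDerivAt_px hg p)).deriv

lemma px_const_mul (c : ℝ) (hf : ContDiff ℝ (⊤:ℕ∞) f) :
    px (fun p => c * f p) = fun p => c * px f p :=
  funext fun p => ((hasDerivAt_px hf p).const_mul c).deriv

lemma px_div (hf : ContDiff ℝ (⊤:ℕ∞) f) (hg : ContDiff ℝ (⊤:ℕ∞) g)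
    (hg0 : ∀ p, g p ≠ 0) :
    px (fun p => f p / g p) =
      fun p => (px f p * g p - f p * px g p) / (g p) ^ 2 :=
  funext fun p => ((hasDerivAt_px hf p).div (hasDerivAt_px hg p) (hg0 p)).deriv

lemma pt_div (hf : ContDiff ℝ (⊤:ℕ∞) f) (hg : ContDiff ℝ (⊤:ℕ∞) g)
    (hg0 : ∀ p, g p ≠ 0) :
    pt (fun p => f p / g p) =
      fun p => (pt f p * g p - f p * pt g p) / (g p) ^ 2 :=
  funext fun p => ((hasDerivAt_pt hf p).div (hasDerivAt_pt hg p) (hg0 p)).deriv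

end helpers

/-- Inversion of the Miura transformation: if KdV(V) = 0 and ψ > 0 satisfies
    ψ_t = 2Vψ_x - V_xψ and ψ_xx = Vψ, then φ = ψ_x/ψ solves mKdV. -/
theorem miura_inversion (V ψ : ℝ × ℝ → ℝ)
    (hV : ContDiff ℝ (⊤ : ℕ∞) V) (hψ : ContDiff ℝ (⊤ : ℕ∞) ψ)
    (hpos : ∀ p : ℝ × ℝ, 0 < ψ p)
    (hKdV : ∀ p : ℝ × ℝ, KdVop V p = 0)
    (hevol : ∀ p : ℝ × ℝ, pt ψ p = 2 * V p * px ψ p - px V p * ψ p)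
    (hschr : ∀ p : ℝ × ℝ, px (px ψ) p = V p * ψ p) :
    ∀ p : ℝ × ℝ, mKdVop (fun q => px ψ q / ψ q) p = 0 := by
  intro p
  simp only [mKdVop]
  have hV' : ContDiff ℝ (⊤:ℕ∞) V := hV.of_le (mod_cast le_top)
  have hψ' : ContDiff ℝ (⊤:ℕ∞) ψ := hψ.of_le (mod_cast le_top)
  have hne : ∀ q, ψ q ≠ 0 := fun q => (hpos q).ne'
  have hA : ContDiff ℝ (⊤:ℕ∞) (px ψ) := contDiff_px hψ'
  have hφ : ContDiff ℝ (⊤:ℕ∞) (fun q => px ψ q / ψ q) := hA.div hψ' hne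
  -- first x-derivative
  have h1 : px (fun q => px ψ q / ψ q) = fun q => V q - (px ψ q / ψ q) ^ 2 := by
    rw [px_div hA hψ' hne]
    funext q
    have h := hschr q
    field_simp [hne q]
    rw [h]; ring
  have hg1 : ContDiff ℝ (⊤:ℕ∞) (fun q => V q - (px ψ q / ψ q) ^ 2) := hV'.sub (hφ.pow 2)
  -- second x-derivative
  have h2 : px (fun q => V q - (px ψ q / ψ q) ^ 2)
      = fun q => px V q - 2 * (px ψ q / ψ q) * (V q - (px ψ q / ψ q) ^ 2) := by
    have e : (fun q => V q - (px ψ q / ψ q) ^ 2)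
        = fun q => V q - (px ψ q / ψ q) * (px ψ q / ψ q) := by funext q; ring
    rw [e, px_sub hV' (hφ.mul hφ), px_mul hφ hφ, h1]
    funext q; simp only; ring
  have h2' : px (px (fun q => px ψ q / ψ q))
      = fun q => px V q - 2 * (px ψ q / ψ q) * (V q - (px ψ q / ψ q) ^ 2) := by
    rw [h1]; exact h2
  -- third x-derivative
  have h3 : px (px (px (fun q => px ψ q / ψ q))) p = px (px V) p
      - 2 * ((V p - (px ψ p / ψ p) ^ 2) * (V p - (px ψ p / ψ p) ^ 2)
        + (px ψ p / ψ p) * (px V p - 2 * (px ψ p / ψ p) * (V p - (px ψ p / ψ p) ^ 2))) := by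
    rw [h2']
    have e : (fun q => px V q - 2 * (px ψ q / ψ q) * (V q - (px ψ q / ψ q) ^ 2))
        = fun q => px V q - 2 * ((px ψ q / ψ q) * (V q - (px ψ q / ψ q) ^ 2)) := by
      funext q; ring
    rw [e, px_sub (contDiff_px hV') (contDiff_const.mul (hφ.mul hg1)),
      px_const_mul 2 (hφ.mul hg1), px_mul hφ hg1, h1, h2]
  -- time derivative
  have hptψ : pt ψ = fun q => 2 * (V q * px ψ q) - px V q * ψ q := by
    funext q; rw [hevol q]; ring
  have hptA : ∀ q, pt (px ψ) q
      = px V q * px ψ q + 2 * V q ^ 2 * ψ q - px (px V) q * ψ q := by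
    intro q
    rw [pt_px_comm hψ', hptψ,
      px_sub (contDiff_const.mul (hV'.mul hA)) ((contDiff_px hV').mul hψ'),
      px_const_mul 2 (hV'.mul hA), px_mul hV' hA, px_mul (contDiff_px hV') hψ']
    simp only [hschr]; ring
  have h4 : pt (fun q => px ψ q / ψ q) p
      = 2 * px V p * (px ψ p / ψ p) + 2 * V p ^ 2 - px (px V) p
        - 2 * V p * (px ψ p / ψ p) ^ 2 := by
    rw [pt_div hA hψ' hne]
    simp only [hptA, hevol]
    field_simp [hne p]
    ring
  -- assemble
  rw [h3, h4, h1]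
  ring
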